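/- Let A ∈ GL(n, ℤ) and let f, g : B_r → ℂⁿ both be symplectic and Λ_A-equivariant with the normalization f(0) = g(0) = 0. Then for every z ∈ B_r the images of the torus orbit through z agree, f(Tⁿ·z) = g(Tⁿ·z) (where Tⁿ·z = {t·z : t ∈ Tⁿ} ⊆ B_r), and consequently f(B_r) = g(B_r). -/

import Mathlib

open scoped BigOperators

/-- The standard symplectic form on `ℂⁿ`: `ω₀(u, v) = ∑ₖ Im(conj(uₖ)·vₖ)`. -/
noncomputable def omega0 (n : ℕ) (u v : EuclideanSpace ℂ (Fin n)) : ℝ :=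
  ∑ k, ((starRingEnd ℂ) (u k) * v k).im

/-- The componentwise rotation action of the `n`-torus `Tⁿ = (S¹)ⁿ` on `ℂⁿ`. -/
def torusSMul (n : ℕ) (t : Fin n → Circle) (z : EuclideanSpace ℂ (Fin n)) :
    EuclideanSpace ℂ (Fin n) :=
  WithLp.toLp 2 (fun k => (t k : ℂ) * z k)

/-- For `A ∈ GL(n, ℤ)`, the induced torus automorphism `Λ_A(t)ᵢ = ∏ⱼ tⱼ^{Aᵢⱼ}`. -/
noncomputable def torusAut (n : ℕ) (A : GL (Fin n) ℤ) (t : Fin n → Circle) : Fin n → Circle :=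
  fun i => ∏ j, t j ^ ((A : Matrix (Fin n) (Fin n) ℤ) i j)

/-- `φ` is symplectic on the closed ball of radius `r`: it is `C^∞` there and its
Fréchet derivative (within the ball) preserves `ω₀` at every point. -/
noncomputable def IsSymplecticOn (n : ℕ) (r : ℝ)
    (φ : EuclideanSpace ℂ (Fin n) → EuclideanSpace ℂ (Fin n)) : Prop :=
  ContDiffOn ℝ (⊤ : ℕ∞) φ (Metric.closedBall 0 r) ∧
    ∀ z ∈ Metric.closedBall (0 : EuclideanSpace ℂ (Fin n)) r, ∀ u v,
      omega0 n (fderivWithin ℝ φ (Metric.closedBall 0 r) z u)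
        (fderivWithin ℝ φ (Metric.closedBall 0 r) z v) = omega0 n u v

/-- `φ` is `Λ_A`-equivariant on the closed ball of radius `r`. -/
def IsEquivariantOn (n : ℕ) (r : ℝ) (A : GL (Fin n) ℤ)
    (φ : EuclideanSpace ℂ (Fin n) → EuclideanSpace ℂ (Fin n)) : Prop :=
  ∀ t : Fin n → Circle, ∀ z ∈ Metric.closedBall (0 : EuclideanSpace ℂ (Fin n)) r,
    φ (torusSMul n t z) = torusSMul n (torusAut n A t) (φ z)

/-- The torus orbit `Tⁿ·z = {t·z : t ∈ Tⁿ}` through a point `z ∈ ℂⁿ`. -/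
def torusOrbit (n : ℕ) (z : EuclideanSpace ℂ (Fin n)) : Set (EuclideanSpace ℂ (Fin n)) :=
  Set.range fun t : Fin n → Circle => torusSMul n t z

section SymplecticAuxSection

open Complex Metric

noncomputable section

private lemma hasDerivAt_cexp_mul (a c : ℂ) :
    HasDerivAt (fun θ : ℝ => Complex.exp ((θ : ℂ) * a) * c) (a * c) 0 := by
  have h0 : HasDerivAt (fun θ : ℝ => (θ : ℂ)) 1 0 := by
    simpa using (hasDerivAt_id (0:ℝ)).ofReal_comp
  have h1 := ((h0.mul_const a).cexp).mul_const c
  simpa using h1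

private def evec (n : ℕ) (w : Fin n → ℂ) : EuclideanSpace ℂ (Fin n) := WithLp.toLp 2 w

private lemma hasDerivAt_euclidean {n : ℕ} {φ : ℝ → EuclideanSpace ℂ (Fin n)}
    {φ' : EuclideanSpace ℂ (Fin n)} {x : ℝ}
    (h : ∀ i, HasDerivAt (fun θ => φ θ i) (φ' i) x) : HasDerivAt φ φ' x := by
  set e := PiLp.continuousLinearEquiv 2 ℝ (fun _ : Fin n => ℂ) with he
  have hpi : HasDerivAt (fun θ => e (φ θ)) (e φ') x := hasDerivAt_pi.mpr h
  have h2 := (e.symm.toContinuousLinearMap.hasFDerivAt).comp_hasDerivAt x hpi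
  exact h2

private lemma circle_coe_pow (t : Circle) (l : ℕ) : ((t ^ l : Circle) : ℂ) = (t : ℂ) ^ l := by
  induction l with
  | zero => simp
  | succ l ih => rw [pow_succ, pow_succ, Circle.coe_mul, ih]

private lemma circle_coe_zpow (t : Circle) (m : ℤ) : ((t ^ m : Circle) : ℂ) = (t : ℂ) ^ m := by
  cases m with
  | ofNat l => rw [Int.ofNat_eq_coe, zpow_natCast, zpow_natCast, circle_coe_pow]
  | negSucc l => rw [zpow_negSucc, zpow_negSucc, Circle.coe_inv, circle_coe_pow]

private lemma circle_exp_zpow (θ : ℝ) (m : ℤ) :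
    ((Circle.exp θ ^ m : Circle) : ℂ) = Complex.exp ((m * θ : ℝ) * Complex.I) := by
  rw [circle_coe_zpow, Circle.coe_exp, ← Complex.exp_int_mul]
  congr 1
  push_cast
  ring

private lemma prod_zpow_circle {ι : Type*} (s : Finset ι) (a : Circle) (e : ι → ℤ) :
    ∏ j ∈ s, a ^ e j = a ^ (∑ j ∈ s, e j) := by
  induction s using Finset.cons_induction with
  | empty => simp
  | cons j s hj ih => rw [Finset.prod_cons, Finset.sum_cons, ih, zpow_add]

private lemma torusAut_comp {n : ℕ} (A B : GL (Fin n) ℤ) (t : Fin n → Circle) :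
    torusAut n A (torusAut n B t) = torusAut n (A * B) t := by
  funext i
  unfold torusAut
  calc ∏ j, (∏ l, t l ^ ((B : Matrix (Fin n) (Fin n) ℤ) j l)) ^ ((A : Matrix (Fin n) (Fin n) ℤ) i j)
      = ∏ j, ∏ l, t l ^ ((B : Matrix (Fin n) (Fin n) ℤ) j l * (A : Matrix (Fin n) (Fin n) ℤ) i j) := by
        refine Finset.prod_congr rfl fun j _ => ?_
        rw [← Finset.prod_zpow]
        exact Finset.prod_congr rfl fun l _ => (zpow_mul _ _ _).symm
    _ = ∏ l, t l ^ (∑ j, (B : Matrix (Fin n) (Fin n) ℤ) j l * (A : Matrix (Fin n) (Fin n) ℤ) i j) := by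
        rw [Finset.prod_comm]
        exact Finset.prod_congr rfl fun l _ => prod_zpow_circle _ _ _
    _ = ∏ l, t l ^ (((A * B : GL (Fin n) ℤ) : Matrix (Fin n) (Fin n) ℤ) i l) := by
        refine Finset.prod_congr rfl fun l _ => ?_
        congr 1
        rw [Units.val_mul, Matrix.mul_apply]
        exact Finset.sum_congr rfl fun j _ => mul_comm _ _

private lemma torusAut_one {n : ℕ} (t : Fin n → Circle) : torusAut n 1 t = t := by
  funext i
  unfold torusAut
  rw [Finset.prod_eq_single i (fun j _ hj => by
      rw [Units.val_one, Matrix.one_apply_ne' hj, zpow_zero])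
    (fun h => absurd (Finset.mem_univ i) h)]
  rw [Units.val_one, Matrix.one_apply_eq, zpow_one]

private lemma torusAut_surj {n : ℕ} (A : GL (Fin n) ℤ) (s : Fin n → Circle) :
    torusAut n A (torusAut n A⁻¹ s) = s := by
  rw [torusAut_comp, mul_inv_cancel, torusAut_one]

private lemma torusSMul_mem {n : ℕ} {r : ℝ} (t : Fin n → Circle)
    {z : EuclideanSpace ℂ (Fin n)} (hz : z ∈ closedBall (0 : EuclideanSpace ℂ (Fin n)) r) :
    torusSMul n t z ∈ closedBall (0 : EuclideanSpace ℂ (Fin n)) r := by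
  rw [mem_closedBall_zero_iff] at *
  have h : ‖torusSMul n t z‖ = ‖z‖ := by
    rw [EuclideanSpace.norm_eq, EuclideanSpace.norm_eq]
    congr 1
    refine Finset.sum_congr rfl fun i _ => ?_
    show ‖(t i : ℂ) * z i‖ ^ 2 = ‖z i‖ ^ 2
    rw [norm_mul]
    have : ‖(t i : ℂ)‖ = 1 := Circle.norm_coe _
    rw [this, one_mul]
  rw [h]; exact hz

private lemma torusSMul_one {n : ℕ} (z : EuclideanSpace ℂ (Fin n)) : torusSMul n 1 z = z := by
  ext i
  show ((1 : Circle) : ℂ) * z i = z i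
  rw [Circle.coe_one, one_mul]

private lemma torusSMul_torusSMul {n : ℕ} (t t' : Fin n → Circle) (z : EuclideanSpace ℂ (Fin n)) :
    torusSMul n t (torusSMul n t' z) = torusSMul n (t * t') z := by
  ext i
  show (t i : ℂ) * ((t' i : ℂ) * z i) = ((t i * t' i : Circle) : ℂ) * z i
  rw [Circle.coe_mul, mul_assoc]

private lemma key_deriv {n : ℕ} {r : ℝ} {A : GL (Fin n) ℤ}
    {φ : EuclideanSpace ℂ (Fin n) → EuclideanSpace ℂ (Fin n)}
    (hsymp : IsSymplecticOn n r φ) (hequiv : IsEquivariantOn n r A φ)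
    {z : EuclideanSpace ℂ (Fin n)} (hz : z ∈ closedBall (0 : EuclideanSpace ℂ (Fin n)) r)
    (k : Fin n) :
    fderivWithin ℝ φ (closedBall 0 r) z (EuclideanSpace.single k (Complex.I * z k)) =
      (fun i => (((A : Matrix (Fin n) (Fin n) ℤ) i k : ℂ)) * Complex.I * φ z i) := by
  set s := closedBall (0 : EuclideanSpace ℂ (Fin n)) r with hs
  set m : Fin n → ℤ := fun i => (A : Matrix (Fin n) (Fin n) ℤ) i k with hm
  set tk : ℝ → Fin n → Circle := fun θ j => if j = k then Circle.exp θ else 1 with htk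
  have hmem : ∀ θ, torusSMul n (tk θ) z ∈ s := fun θ => torusSMul_mem _ hz
  have hdiff : DifferentiableOn ℝ φ s := hsymp.1.differentiableOn (by simp)
  have hφd : HasFDerivWithinAt φ (fderivWithin ℝ φ s z) s z := (hdiff z hz).hasFDerivWithinAt
  -- derivative of the curve
  have hγ : HasDerivAt (fun θ : ℝ => torusSMul n (tk θ) z)
      (EuclideanSpace.single k (Complex.I * z k)) 0 := by
    apply hasDerivAt_euclidean
    intro i
    by_cases hik : i = k
    · subst hik
      have h1 : (fun θ : ℝ => torusSMul n (tk θ) z i)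
          = fun θ : ℝ => Complex.exp ((θ : ℂ) * Complex.I) * z i := by
        funext θ
        show ((if i = i then Circle.exp θ else 1 : Circle) : ℂ) * z i = _
        rw [if_pos rfl, Circle.coe_exp]
      rw [h1]
      have h2 := hasDerivAt_cexp_mul Complex.I (z i)
      simpa [EuclideanSpace.single_apply] using h2
    · have h1 : (fun θ : ℝ => torusSMul n (tk θ) z i) = fun _ : ℝ => z i := by
        funext θ
        show ((if i = k then Circle.exp θ else 1 : Circle) : ℂ) * z i = z i
        rw [if_neg hik, Circle.coe_one, one_mul]
      rw [h1]
      simpa [EuclideanSpace.single_apply, hik] using hasDerivAt_const (0 : ℝ) (z i)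
  have h0 : torusSMul n (tk 0) z = z := by
    ext i
    show ((if i = k then Circle.exp 0 else 1 : Circle) : ℂ) * z i = z i
    rw [Circle.exp_zero]
    simp
  -- LHS derivative
  have hL : HasDerivAt (fun θ : ℝ => φ (torusSMul n (tk θ) z))
      (fderivWithin ℝ φ s z (EuclideanSpace.single k (Complex.I * z k))) 0 := by
    have h2 := HasFDerivWithinAt.comp_hasDerivWithinAt_of_eq (x := (0 : ℝ)) hφd
      (hγ.hasDerivWithinAt (s := Set.univ)) (fun θ _ => hmem θ) h0.symm
    exact (hasDerivWithinAt_univ).mp h2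
  -- RHS derivative
  have hR : HasDerivAt
      (fun θ : ℝ => evec n (fun i => Complex.exp ((θ : ℂ) * ((m i : ℂ) * Complex.I)) * φ z i))
      (evec n (fun i => ((m i : ℂ)) * Complex.I * φ z i)) 0 := by
    apply hasDerivAt_euclidean
    intro i
    exact hasDerivAt_cexp_mul ((m i : ℂ) * Complex.I) (φ z i)
  -- the two functions agree
  have heq : (fun θ : ℝ => φ (torusSMul n (tk θ) z))
      = (fun θ : ℝ => evec n (fun i => Complex.exp ((θ : ℂ) * ((m i : ℂ) * Complex.I)) * φ z i)) := by
    funext θ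
    rw [hequiv (tk θ) z hz]
    ext i
    show ((torusAut n A (tk θ)) i : ℂ) * φ z i = _
    have haut : torusAut n A (tk θ) i = Circle.exp θ ^ (m i) := by
      unfold torusAut
      rw [Finset.prod_eq_single k (fun j _ hj => by
          show (if j = k then Circle.exp θ else 1 : Circle) ^ _ = 1
          rw [if_neg hj, one_zpow])
        (fun h => absurd (Finset.mem_univ k) h)]
      show (if k = k then Circle.exp θ else 1 : Circle) ^ _ = _
      rw [if_pos rfl]
    rw [haut]
    congr 1
    rw [circle_exp_zpow]
    congr 1
    push_cast
    ring
  rw [heq] at hL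
  exact congrArg WithLp.ofLp (hL.unique hR)

private def circleMk (x : ℂ) (hx : ‖x‖ = 1) : Circle := ⟨x, mem_sphere_zero_iff_norm.2 hx⟩

private lemma circleMk_coe (x : ℂ) (hx : ‖x‖ = 1) : ((circleMk x hx : Circle) : ℂ) = x := rfl

private def nsCLM (a : ℂ) : ℂ →L[ℝ] ℝ :=
  (2 * a.re) • Complex.reCLM + (2 * a.im) • Complex.imCLM

private lemma nsCLM_apply (a v : ℂ) : nsCLM a v = 2 * ((starRingEnd ℂ) a * v).re := by
  simp [nsCLM, Complex.mul_re]
  ring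

private lemma hasFDerivAt_normSq (a : ℂ) : HasFDerivAt Complex.normSq (nsCLM a) a := by
  have h : (Complex.normSq : ℂ → ℝ) = fun w => w.re * w.re + w.im * w.im :=
    funext Complex.normSq_apply
  rw [h]
  have hre : HasFDerivAt (fun w : ℂ => w.re) Complex.reCLM a := Complex.reCLM.hasFDerivAt
  have him : HasFDerivAt (fun w : ℂ => w.im) Complex.imCLM a := Complex.imCLM.hasFDerivAt
  have h2 := (hre.mul hre).add (him.mul him)
  have h3 : nsCLM a = a.re • Complex.reCLM + a.re • Complex.reCLM
      + (a.im • Complex.imCLM + a.im • Complex.imCLM) := by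
    refine ContinuousLinearMap.ext fun v => ?_
    simp only [nsCLM, ContinuousLinearMap.add_apply, ContinuousLinearMap.smul_apply,
      Complex.reCLM_apply, Complex.imCLM_apply, smul_eq_mul]
    ring
  rw [h3]; exact h2

private lemma moment_identity {n : ℕ} {r : ℝ} (hr : 0 < r) (A : GL (Fin n) ℤ)
    {φ : EuclideanSpace ℂ (Fin n) → EuclideanSpace ℂ (Fin n)}
    (hsymp : IsSymplecticOn n r φ) (hequiv : IsEquivariantOn n r A φ) (hφ0 : φ 0 = 0) :
    ∀ z ∈ closedBall (0 : EuclideanSpace ℂ (Fin n)) r, ∀ k : Fin n,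
      ∑ i, (((A : Matrix (Fin n) (Fin n) ℤ) i k : ℝ) * Complex.normSq (φ z i))
        = Complex.normSq (z k) := by
  intro z hz k
  set s := closedBall (0 : EuclideanSpace ℂ (Fin n)) r with hs
  have hconv : Convex ℝ s := convex_closedBall _ _
  have hU : UniqueDiffOn ℝ s := uniqueDiffOn_convex hconv
    (by rw [interior_closedBall _ hr.ne']; exact ⟨0, mem_ball_self hr⟩)
  have hdiff : DifferentiableOn ℝ φ s := hsymp.1.differentiableOn (by simp)
  set c : Fin n → ℝ := fun i => ((A : Matrix (Fin n) (Fin n) ℤ) i k : ℝ) with hc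
  set H : EuclideanSpace ℂ (Fin n) → ℝ :=
    fun w => (∑ i, c i * Complex.normSq (φ w i)) - Complex.normSq (w k) with hH
  -- H has zero derivative within s at every point of s
  have hasF : ∀ w ∈ s, HasFDerivWithinAt H (0 : EuclideanSpace ℂ (Fin n) →L[ℝ] ℝ) s w := by
    intro w hw
    have hφd : HasFDerivWithinAt φ (fderivWithin ℝ φ s w) s w := (hdiff w hw).hasFDerivWithinAt
    set prj : Fin n → (EuclideanSpace ℂ (Fin n) →L[ℝ] ℂ) :=
      fun i => (EuclideanSpace.proj (𝕜 := ℂ) i).restrictScalars ℝ with hprj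
    have hq : ∀ i : Fin n, HasFDerivWithinAt (fun y => Complex.normSq (φ y i))
        ((nsCLM (φ w i)).comp ((prj i).comp (fderivWithin ℝ φ s w))) s w := by
      intro i
      have h1 : HasFDerivWithinAt (fun y => φ y i)
          ((prj i).comp (fderivWithin ℝ φ s w)) s w :=
        (prj i).hasFDerivAt.comp_hasFDerivWithinAt w hφd
      exact (hasFDerivAt_normSq (φ w i)).comp_hasFDerivWithinAt w h1
    have hk' : HasFDerivWithinAt (fun y : EuclideanSpace ℂ (Fin n) => Complex.normSq (y k))
        ((nsCLM (w k)).comp (prj k)) s w :=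
      (hasFDerivAt_normSq (w k)).comp_hasFDerivWithinAt w ((prj k).hasFDerivAt.hasFDerivWithinAt)
    have hsum : HasFDerivWithinAt H
        ((∑ i, c i • ((nsCLM (φ w i)).comp ((prj i).comp (fderivWithin ℝ φ s w))))
          - (nsCLM (w k)).comp (prj k)) s w :=
      (HasFDerivWithinAt.fun_sum (fun i _ => (hq i).const_mul (c i))).sub hk'
    have hzero : ((∑ i, c i • ((nsCLM (φ w i)).comp ((prj i).comp (fderivWithin ℝ φ s w))))
          - (nsCLM (w k)).comp (prj k)) = 0 := by
      ext v
      have hsympl := hsymp.2 w hw (EuclideanSpace.single k (Complex.I * w k)) v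
      rw [← WithLp.toLp_ofLp (x := fderivWithin ℝ φ (closedBall 0 r) w (EuclideanSpace.single k (Complex.I * w k))), key_deriv hsymp hequiv hw k] at hsympl
      -- compute both sides of hsympl
      have hlhs : omega0 n (WithLp.toLp 2 (fun i => (((A : Matrix (Fin n) (Fin n) ℤ) i k : ℂ)) * Complex.I * φ w i))
          (fderivWithin ℝ φ s w v)
          = ∑ i, -(c i * ((starRingEnd ℂ) (φ w i) * (fderivWithin ℝ φ s w v) i).re) := by
        unfold omega0
        refine Finset.sum_congr rfl fun i _ => ?_
        simp [Complex.mul_re, Complex.mul_im, hc]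
        ring
      have hrhs : omega0 n (EuclideanSpace.single k (Complex.I * w k)) v
          = -(((starRingEnd ℂ) (w k) * v k).re) := by
        unfold omega0
        rw [Finset.sum_eq_single k (fun j _ hj => by
            rw [EuclideanSpace.single_apply, if_neg hj]
            simp)
          (fun h => absurd (Finset.mem_univ k) h)]
        rw [EuclideanSpace.single_apply, if_pos rfl]
        simp [Complex.mul_re, Complex.mul_im]
        ring
      rw [hlhs, hrhs] at hsympl
      simp only [ContinuousLinearMap.sub_apply, ContinuousLinearMap.coe_sum', Finset.sum_apply,
        ContinuousLinearMap.smul_apply, ContinuousLinearMap.comp_apply,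
        ContinuousLinearMap.zero_apply, nsCLM_apply, smul_eq_mul]
      have hps : ∀ i : Fin n, (prj i) (fderivWithin ℝ φ s w v) = (fderivWithin ℝ φ s w v) i :=
        fun i => rfl
      have hpv : (prj k) v = v k := rfl
      rw [hpv]
      simp only [hps]
      have hsympl' : (∑ i, c i * ((starRingEnd ℂ) (φ w i) * (fderivWithin ℝ φ s w v) i).re)
          = ((starRingEnd ℂ) (w k) * v k).re := by
        rw [Finset.sum_neg_distrib] at hsympl
        linarith [hsympl]
      have h2 : (∑ i, c i * (2 * ((starRingEnd ℂ) (φ w i) * (fderivWithin ℝ φ s w v) i).re))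
          = 2 * ∑ i, c i * ((starRingEnd ℂ) (φ w i) * (fderivWithin ℝ φ s w v) i).re := by
        rw [Finset.mul_sum]
        exact Finset.sum_congr rfl fun i _ => by ring
      rw [h2, hsympl']
      ring
    rw [hzero] at hsum
    exact hsum
  -- constancy of H on s
  have hHdiff : DifferentiableOn ℝ H s := fun w hw => (hasF w hw).differentiableWithinAt
  have hbound : ∀ w ∈ s, ‖fderivWithin ℝ H s w‖ ≤ 0 := by
    intro w hw
    rw [(hasF w hw).fderivWithin (hU w hw)]
    simp
  have h0s : (0 : EuclideanSpace ℂ (Fin n)) ∈ s := mem_closedBall_self hr.le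
  have hle := hconv.norm_image_sub_le_of_norm_fderivWithin_le hHdiff hbound h0s hz
  have hH0 : H 0 = 0 := by
    have hφ0i : ∀ i, φ 0 i = 0 := fun i => by simp [hφ0]
    simp [hH, hφ0i]
  have hHz : H z = 0 := by
    have : ‖H z - H 0‖ ≤ 0 := by simpa using hle
    have h3 : H z - H 0 = 0 := by
      have := norm_le_zero_iff.mp this
      exact this
    rw [hH0] at h3
    simpa using h3
  have := hHz
  rw [hH] at this
  simp only at this
  linarith [this]

private lemma normSq_agree {n : ℕ} {r : ℝ} (hr : 0 < r) (A : GL (Fin n) ℤ)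
    {f g : EuclideanSpace ℂ (Fin n) → EuclideanSpace ℂ (Fin n)}
    (hfsymp : IsSymplecticOn n r f) (hfequiv : IsEquivariantOn n r A f)
    (hgsymp : IsSymplecticOn n r g) (hgequiv : IsEquivariantOn n r A g)
    (hf0 : f 0 = 0) (hg0 : g 0 = 0) :
    ∀ z ∈ closedBall (0 : EuclideanSpace ℂ (Fin n)) r, ∀ i,
      Complex.normSq (f z i) = Complex.normSq (g z i) := by
  intro z hz
  set M : Matrix (Fin n) (Fin n) ℝ := ((A : Matrix (Fin n) (Fin n) ℤ)).map (Int.cast) with hM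
  have hdet : IsUnit M.det := by
    have h1 : M.det = (((A : Matrix (Fin n) (Fin n) ℤ).det : ℤ) : ℝ) :=
      ((Int.castRingHom ℝ).map_det _).symm
    rw [h1]
    exact (Matrix.isUnit_iff_isUnit_det _ |>.mp A.isUnit).map (Int.castRingHom ℝ)
  set d : Fin n → ℝ := fun i => Complex.normSq (f z i) - Complex.normSq (g z i) with hd
  have hvm : Matrix.vecMul d M = 0 := by
    funext kk
    have hfm := moment_identity hr A hfsymp hfequiv hf0 z hz kk
    have hgm := moment_identity hr A hgsymp hgequiv hg0 z hz kk
    show (∑ i, d i * M i kk) = 0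
    have : (∑ i, d i * M i kk)
        = (∑ i, ((A : Matrix (Fin n) (Fin n) ℤ) i kk : ℝ) * Complex.normSq (f z i))
          - (∑ i, ((A : Matrix (Fin n) (Fin n) ℤ) i kk : ℝ) * Complex.normSq (g z i)) := by
      rw [← Finset.sum_sub_distrib]
      refine Finset.sum_congr rfl fun i _ => ?_
      simp [hd, hM, Matrix.map_apply]
      ring
    rw [this, hfm, hgm, sub_self]
  have hdz : d = 0 := by
    have h2 := congrArg (fun v => Matrix.vecMul v M⁻¹) hvm
    simpa [Matrix.vecMul_vecMul, Matrix.mul_nonsing_inv M hdet, Matrix.vecMul_one,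
      Matrix.zero_vecMul] using h2
  intro i
  have := congrFun hdz i
  simp only [hd, Pi.zero_apply] at this
  linarith [this]

private lemma torusOrbit_smul {n : ℕ} (t : Fin n → Circle) (z : EuclideanSpace ℂ (Fin n)) :
    torusOrbit n (torusSMul n t z) = torusOrbit n z := by
  ext x
  constructor
  · rintro ⟨u, rfl⟩
    exact ⟨u * t, (torusSMul_torusSMul u t z).symm⟩
  · rintro ⟨u, rfl⟩
    refine ⟨u * t⁻¹, ?_⟩
    show torusSMul n (u * t⁻¹) (torusSMul n t z) = torusSMul n u z
    rw [torusSMul_torusSMul, mul_assoc, inv_mul_cancel, mul_one]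

private lemma torusOrbit_eq_of_normSq {n : ℕ} {w w' : EuclideanSpace ℂ (Fin n)}
    (h : ∀ i, Complex.normSq (w i) = Complex.normSq (w' i)) :
    torusOrbit n w = torusOrbit n w' := by
  have hex : ∃ t : Fin n → Circle, torusSMul n t w' = w := by
    refine ⟨fun i => if hwi : w' i = 0 then 1 else circleMk (w i / w' i) (by
      have hn : ‖w i‖ = ‖w' i‖ := by
        have hh := h i
        rw [Complex.normSq_eq_norm_sq, Complex.normSq_eq_norm_sq] at hh
        have h1 : (0:ℝ) ≤ ‖w i‖ := norm_nonneg _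
        have h2 : (0:ℝ) ≤ ‖w' i‖ := norm_nonneg _
        nlinarith
      rw [norm_div, hn, div_self]
      exact norm_ne_zero_iff.mpr hwi), ?_⟩
    ext i
    show ((if hwi : w' i = 0 then 1 else circleMk _ _ : Circle) : ℂ) * w' i = w i
    by_cases hwi : w' i = 0
    · have hzero : w i = 0 := by
        have hh := h i
        rw [hwi] at hh
        simp only [Complex.normSq_zero] at hh
        exact Complex.normSq_eq_zero.mp hh
      rw [dif_pos hwi, Circle.coe_one, one_mul, hwi, hzero]
    · rw [dif_neg hwi, circleMk_coe, div_mul_cancel₀ _ hwi]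
  obtain ⟨t, ht⟩ := hex
  rw [← ht, torusOrbit_smul]

/-- If `f, g : B_r → ℂⁿ` are both symplectic and `Λ_A`-equivariant with
`f(0) = g(0) = 0`, then `f(Tⁿ·z) = g(Tⁿ·z)` for every `z ∈ B_r`, and consequently
`f(B_r) = g(B_r)`. -/
theorem equivariant_symplectic_orbit_images_agree (n : ℕ) (hn : 1 ≤ n) (r : ℝ)
    (hr : 0 < r) (A : GL (Fin n) ℤ)
    (f g : EuclideanSpace ℂ (Fin n) → EuclideanSpace ℂ (Fin n))
    (hfsymp : IsSymplecticOn n r f) (hfequiv : IsEquivariantOn n r A f)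
    (hgsymp : IsSymplecticOn n r g) (hgequiv : IsEquivariantOn n r A g)
    (hf0 : f 0 = 0) (hg0 : g 0 = 0) :
    (∀ z ∈ Metric.closedBall (0 : EuclideanSpace ℂ (Fin n)) r,
      f '' torusOrbit n z = g '' torusOrbit n z) ∧
    f '' Metric.closedBall 0 r = g '' Metric.closedBall 0 r  := by
  have horb : ∀ z ∈ Metric.closedBall (0 : EuclideanSpace ℂ (Fin n)) r,
      f '' torusOrbit n z = g '' torusOrbit n z := by
    intro z hz
    have himg : ∀ φ : EuclideanSpace ℂ (Fin n) → EuclideanSpace ℂ (Fin n),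
        IsEquivariantOn n r A φ → φ '' torusOrbit n z = torusOrbit n (φ z) := by
      intro φ hφe
      ext x
      constructor
      · rintro ⟨y, ⟨t, rfl⟩, rfl⟩
        exact ⟨torusAut n A t, (hφe t z hz).symm⟩
      · rintro ⟨t, rfl⟩
        refine ⟨torusSMul n (torusAut n A⁻¹ t) z, ⟨torusAut n A⁻¹ t, rfl⟩, ?_⟩
        rw [hφe _ z hz, torusAut_surj]
    rw [himg f hfequiv, himg g hgequiv]
    exact torusOrbit_eq_of_normSq
      (normSq_agree hr A hfsymp hfequiv hgsymp hgequiv hf0 hg0 z hz)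
  refine ⟨horb, ?_⟩
  apply Set.Subset.antisymm
  · rintro x ⟨z, hz, rfl⟩
    have hfz : f z ∈ f '' torusOrbit n z := ⟨z, ⟨1, torusSMul_one z⟩, rfl⟩
    rw [horb z hz] at hfz
    obtain ⟨y, ⟨t, rfl⟩, hy⟩ := hfz
    exact ⟨torusSMul n t z, torusSMul_mem t hz, hy⟩
  · rintro x ⟨z, hz, rfl⟩
    have hgz : g z ∈ g '' torusOrbit n z := ⟨z, ⟨1, torusSMul_one z⟩, rfl⟩
    rw [← horb z hz] at hgz
    obtain ⟨y, ⟨t, rfl⟩, hy⟩ := hgz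
    exact ⟨torusSMul n t z, torusSMul_mem t hz, hy⟩

end
end SymplecticAuxSection
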